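/- Faà di Bruno's formula for the exponential: if g is m-times differentiable at s, then the m-th derivative of exp(g(s)) equals exp(g(s)) times the sum over all m-tuples (b_1,...,b_m) of non-negative integers with b_1 + 2·b_2 + ... + m·b_m = m of the term (m!/(b_1!···b_m!)) · ∏_{j=1}^m (g^{(j)}(s)/j!)^{b_j}. -/

import Mathlib

/-!
Since `(exp ∘ g)' = g' · (exp ∘ g)`, the Leibniz rule expresses the `(n+1)`-st derivative of
`exp ∘ g` at `s` through the lower ones. Normalising by `exp (g s) * n !` and writing
`c k = g^(k+1)(s) / (k+1)!`, the resulting recurrence `(n+1) D (n+1) = ∑ (k+1) c k D (n-k)` is the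
coefficient form of `F' = G' F` for `F = exp G`, `G = ∑ c k X^(k+1)`. The tuple sum
`∑_b ∏ c_j^b_j / b_j!` satisfies it too: multiply a term by `n + 1 = ∑ (j+1) b_j` and lower
`b_j` by one.
-/

open Finset Function Nat

def tupleWeight {N : ℕ} (b : Fin N → ℕ) : ℕ := ∑ j, (j.1 + 1) * b j

def weightedTuples (N n : ℕ) : Finset (Fin N → ℕ) :=
  (Fintype.piFinset fun _ => range (n + 1)).filter fun b => tupleWeight b = n

theorem succ_mul_le_tupleWeight {N : ℕ} (b : Fin N → ℕ) (j : Fin N) :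
    (j.1 + 1) * b j ≤ tupleWeight b :=
  single_le_sum (f := fun i : Fin N => (i.1 + 1) * b i) (fun _ _ => Nat.zero_le _) (mem_univ j)

theorem mem_weightedTuples {N n : ℕ} {b : Fin N → ℕ} :
    b ∈ weightedTuples N n ↔ tupleWeight b = n := by
  refine ⟨fun h => (mem_filter.mp h).2, fun h => mem_filter.mpr ⟨?_, h⟩⟩
  refine Fintype.mem_piFinset.mpr fun j => mem_range.mpr (Nat.lt_succ_of_le ?_)
  calc b j ≤ (j.1 + 1) * b j := Nat.le_mul_of_pos_left _ j.1.succ_pos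
    _ ≤ n := h ▸ succ_mul_le_tupleWeight b j

theorem tupleWeight_update {N : ℕ} (b : Fin N → ℕ) (j : Fin N) (v : ℕ) :
    tupleWeight (update b j v) + (j.1 + 1) * b j = tupleWeight b + (j.1 + 1) * v := by
  have hupdate : tupleWeight (update b j v) =
      (j.1 + 1) * v + ∑ i ∈ univ \ {j}, (i.1 + 1) * b i := by
    rw [tupleWeight, ← sum_update_of_mem (mem_univ j)]
    exact sum_congr rfl fun i _ => apply_update (fun (i : Fin N) x => (i.1 + 1) * x) b j v i
  have hb : tupleWeight b = (j.1 + 1) * b j + ∑ i ∈ univ \ {j}, (i.1 + 1) * b i := by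
    rw [tupleWeight, ← sum_update_of_mem (mem_univ j), update_eq_self]
  omega

section ExpProd

variable {K : Type*} [Field K]

def expProdTerm {N : ℕ} (c : ℕ → K) (b : Fin N → ℕ) : K := ∏ j : Fin N, c j ^ b j / (b j)!

/-- The coefficient of `X ^ n` in `∏ j : Fin N, exp (c j * X ^ (j + 1))`. -/
def expProdCoeff (N : ℕ) (c : ℕ → K) (n : ℕ) : K := ∑ b ∈ weightedTuples N n, expProdTerm c b

theorem expProdCoeff_zero (N : ℕ) (c : ℕ → K) : expProdCoeff N c 0 = 1 := by
  have hzero : weightedTuples N 0 = {0} := by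
    ext b
    simp [mem_weightedTuples, tupleWeight, funext_iff]
  simp [expProdCoeff, hzero, expProdTerm]

theorem expProdTerm_update {N : ℕ} (c : ℕ → K) (b : Fin N → ℕ) (j : Fin N) (v : ℕ) :
    expProdTerm c (update b j v) = c j ^ v / v ! * ∏ i ∈ univ \ {j}, c i ^ b i / (b i)! := by
  rw [expProdTerm, ← prod_update_of_mem (mem_univ j)]
  exact prod_congr rfl fun i _ => apply_update (fun (i : Fin N) x => c i ^ x / (x ! : K)) b j v i

theorem succ_mul_expProdTerm_update_succ [CharZero K] {N : ℕ} (c : ℕ → K) (b : Fin N → ℕ)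
    (j : Fin N) : (b j + 1 : K) * expProdTerm c (update b j (b j + 1)) = c j * expProdTerm c b := by
  conv_rhs => rw [← update_eq_self j b]
  rw [expProdTerm_update, expProdTerm_update, factorial_succ]
  push_cast
  field_simp
  ring

theorem sum_mul_expProdTerm_of_le [CharZero K] {N n : ℕ} (c : ℕ → K) {j : Fin N}
    (hj : j.1 ≤ n) :
    ∑ b ∈ weightedTuples N (n + 1), (b j : K) * expProdTerm c b =
      c j * expProdCoeff N c (n - j) := by
  rw [← sum_filter_of_ne (p := fun b => b j ≠ 0) fun b _ hb h0 => hb (by simp [h0]),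
    expProdCoeff, mul_sum]
  refine (sum_nbij' (fun b => update b j (b j + 1)) (fun b => update b j (b j - 1))
    ?_ ?_ ?_ ?_ ?_).symm
  · intro b hb
    rw [mem_weightedTuples] at hb
    have hw := tupleWeight_update b j (b j + 1)
    rw [mul_add, mul_one] at hw
    simp only [mem_filter, mem_weightedTuples, update_self]
    omega
  · intro b hb
    rw [mem_filter, mem_weightedTuples] at hb
    have hw := tupleWeight_update b j (b j - 1)
    rw [Nat.mul_sub_one] at hw
    have hpos := Nat.le_mul_of_pos_right (j.1 + 1) (Nat.pos_of_ne_zero hb.2)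
    rw [mem_weightedTuples]
    omega
  · intro b _
    simp
  · intro b hb
    simp [Nat.sub_add_cancel (Nat.pos_of_ne_zero (mem_filter.mp hb).2)]
  · intro b _
    simpa using (succ_mul_expProdTerm_update_succ c b j).symm

theorem sum_mul_expProdTerm_of_lt {N n : ℕ} (c : ℕ → K) {j : Fin N} (hj : n < j.1) :
    ∑ b ∈ weightedTuples N (n + 1), (b j : K) * expProdTerm c b = 0 := by
  refine sum_eq_zero fun b hb => ?_
  have hle := mem_weightedTuples.mp hb ▸ succ_mul_le_tupleWeight b j
  have hbj : b j = 0 := by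
    by_contra h
    have := Nat.le_mul_of_pos_right (j.1 + 1) (Nat.pos_of_ne_zero h)
    omega
  simp [hbj]

theorem succ_mul_expProdCoeff_succ [CharZero K] {N n : ℕ} (hn : n < N) (c : ℕ → K) :
    (n + 1 : K) * expProdCoeff N c (n + 1) =
      ∑ k ∈ range (n + 1), (k + 1 : K) * c k * expProdCoeff N c (n - k) := by
  calc (n + 1 : K) * expProdCoeff N c (n + 1)
      = ∑ b ∈ weightedTuples N (n + 1), ∑ j : Fin N, (j.1 + 1 : K) * (b j * expProdTerm c b) := by
        rw [expProdCoeff, mul_sum]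
        refine sum_congr rfl fun b hb => ?_
        have hweight : (n + 1 : K) = ∑ j : Fin N, (j.1 + 1 : K) * b j := by
          exact_mod_cast (mem_weightedTuples.mp hb).symm
        simp only [hweight, sum_mul, mul_assoc]
    _ = ∑ j : Fin N, if j.1 ≤ n then (j.1 + 1 : K) * c j * expProdCoeff N c (n - j) else 0 := by
        rw [sum_comm]
        refine sum_congr rfl fun j _ => ?_
        rw [← mul_sum]
        split_ifs with hj
        · rw [sum_mul_expProdTerm_of_le c hj, mul_assoc]
        · rw [sum_mul_expProdTerm_of_lt c (not_le.mp hj), mul_zero]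
    _ = _ := by
        rw [Fin.sum_univ_eq_sum_range
          (fun k => if k ≤ n then (k + 1 : K) * c k * expProdCoeff N c (n - k) else 0),
          ← sum_filter]
        congr 1
        ext k
        simp only [mem_filter, mem_range]
        omega

end ExpProd

theorem iteratedDeriv_succ_exp_comp {g : ℝ → ℝ} {s : ℝ} {n : ℕ}
    (hg : ContDiffAt ℝ (n + 1) g s) :
    iteratedDeriv (n + 1) (fun t => Real.exp (g t)) s =
      ∑ k ∈ range (n + 1), (n.choose k : ℝ) * iteratedDeriv (k + 1) g s *
        iteratedDeriv (n - k) (fun t => Real.exp (g t)) s := by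
  have hderiv : deriv (fun t => Real.exp (g t)) =ᶠ[nhds s] deriv g * fun t => Real.exp (g t) := by
    filter_upwards [hg.eventually (by simp)] with t ht
    rw [Pi.mul_apply, mul_comm]
    exact ((ht.differentiableAt (by simp)).hasDerivAt.exp).deriv
  rw [iteratedDeriv_succ', hderiv.iteratedDeriv_eq,
    iteratedDeriv_mul (hg.derivWithin le_rfl) (hg.of_le le_self_add).exp]
  simp only [← iteratedDeriv_succ']

theorem iteratedDeriv_exp_comp_eq_expProdCoeff {g : ℝ → ℝ} {s : ℝ} {m : ℕ}
    (hg : ContDiffAt ℝ m g s) {n : ℕ} (hn : n ≤ m) :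
    iteratedDeriv n (fun t => Real.exp (g t)) s =
      Real.exp (g s) * n ! * expProdCoeff m (fun k => iteratedDeriv (k + 1) g s / (k + 1)!) n := by
  induction n using Nat.strong_induction_on with
  | _ n ih =>
  cases n with
  | zero => simp [expProdCoeff_zero]
  | succ n =>
    set c : ℕ → ℝ := fun k => iteratedDeriv (k + 1) g s / (k + 1)!
    calc iteratedDeriv (n + 1) (fun t => Real.exp (g t)) s
        = ∑ k ∈ range (n + 1),
            Real.exp (g s) * n ! * ((k + 1 : ℝ) * c k * expProdCoeff m c (n - k)) := by
          rw [iteratedDeriv_succ_exp_comp (hg.of_le (by exact_mod_cast hn))]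
          refine sum_congr rfl fun k hk => ?_
          have hkn : k ≤ n := Nat.lt_succ_iff.mp (mem_range.mp hk)
          have hfac : (n ! : ℝ) = n.choose k * k ! * (n - k)! := by
            exact_mod_cast (choose_mul_factorial_mul_factorial hkn).symm
          rw [ih (n - k) (by omega) (by omega), hfac]
          simp only [c, factorial_succ]
          push_cast
          field_simp
      _ = Real.exp (g s) * (n + 1)! * expProdCoeff m c (n + 1) := by
          rw [← mul_sum, ← succ_mul_expProdCoeff_succ hn, factorial_succ]
          push_cast
          ring

/-- Faà di Bruno's formula for the exponential of an `m`-times continuously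
differentiable function `g` at a point `s`: the `m`-th derivative of `exp (g s)`
is `exp (g s)` times a sum over all tuples `(b₁,…,b_m)` with `∑ j·b_j = m`. -/
theorem faa_di_bruno_exp
    (g : ℝ → ℝ) (m : ℕ) (s : ℝ) (hg : ContDiffAt ℝ m g s) :
    iteratedDeriv m (fun t => Real.exp (g t)) s =
      Real.exp (g s) *
        ∑ b ∈ (Fintype.piFinset fun _ : Fin m => Finset.range (m + 1)) |>.filter
            (fun b => ∑ j : Fin m, (j.1 + 1) * b j = m),
          ((m ! : ℝ) / ∏ j : Fin m, ((b j)! : ℝ)) *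
            ∏ j : Fin m, (iteratedDeriv (j.1 + 1) g s / ((j.1 + 1)! : ℝ)) ^ (b j) := by
  rw [iteratedDeriv_exp_comp_eq_expProdCoeff hg le_rfl, mul_assoc, expProdCoeff, mul_sum]
  congr 1
  refine sum_congr rfl fun b _ => ?_
  rw [expProdTerm, prod_div_distrib]
  ring
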